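/- arXiv:1501.05557 — 4 statements merged into one kernel-verified Lean document; each statement's English description precedes it below -/
import Mathlib

section
/- Let a_2 > a_1 > a_0 ≥ 2 be integers and define P(z) = (z^{a_0}-1)(z^{a_1}-1)(z^{a_2}-1)(z+1) - z[(z^{a_0-1}-1)(z^{a_1}-1)(z^{a_2}-1) + (z^{a_1-1}-1)(z^{a_0}-1)(z^{a_2}-1) + (z^{a_2-1}-1)(z^{a_0}-1)(z^{a_1}-1)]. Then every coefficient of P lies in {-2, -1, 0, 1, 2}, i.e., the naive height of P is at most 2. -/
open Polynomial

set_option maxHeartbeats 1000000 in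
theorem stmt_2 (a0 a1 a2 : ℕ) (h0 : 2 ≤ a0) (h01 : a0 < a1) (h12 : a1 < a2) :
    ∀ n : ℕ,
      |((X ^ a0 - 1) * (X ^ a1 - 1) * (X ^ a2 - 1) * (X + 1)
        - X * ((X ^ (a0 - 1) - 1) * (X ^ a1 - 1) * (X ^ a2 - 1)
              + (X ^ (a1 - 1) - 1) * (X ^ a0 - 1) * (X ^ a2 - 1)
              + (X ^ (a2 - 1) - 1) * (X ^ a0 - 1) * (X ^ a1 - 1)) : Polynomial ℤ).coeff n| ≤ 2 := by
  intro n
  obtain ⟨b0, rfl⟩ : ∃ b, a0 = b + 1 := ⟨a0 - 1, by omega⟩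
  obtain ⟨b1, rfl⟩ : ∃ b, a1 = b + 1 := ⟨a1 - 1, by omega⟩
  obtain ⟨b2, rfl⟩ : ∃ b, a2 = b + 1 := ⟨a2 - 1, by omega⟩
  have key : ((X ^ (b0+1) - 1) * (X ^ (b1+1) - 1) * (X ^ (b2+1) - 1) * (X + 1)
        - X * ((X ^ (b0+1 - 1) - 1) * (X ^ (b1+1) - 1) * (X ^ (b2+1) - 1)
              + (X ^ (b1+1 - 1) - 1) * (X ^ (b0+1) - 1) * (X ^ (b2+1) - 1)
              + (X ^ (b2+1 - 1) - 1) * (X ^ (b0+1) - 1) * (X ^ (b1+1) - 1)) : Polynomial ℤ)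
      = X ^ (b0+b1+b2+4) - X ^ (b0+b1+b2+3) - X ^ (b0+b1+b2+3)
        + X ^ (b1+b2+2) + X ^ (b0+b2+2) + X ^ (b0+b1+2)
        - X ^ (b2+2) - X ^ (b1+2) - X ^ (b0+2) + X ^ 1 + X ^ 1 - 1 := by
    simp only [Nat.add_sub_cancel]
    ring
  rw [key]
  simp only [coeff_sub, coeff_add, coeff_X_pow, coeff_one]
  rw [abs_le]
  constructor <;> split_ifs <;> omega
end

section
/- Let a, b, c, p, q be integers with a, b, c nonzero and (p, q) ≠ (0, 0). If ζ is a root of unity satisfying a·ζ^p + b·ζ^q + c = 0, then the order of ζ divides 6·gcd(p, q). -/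
/-!
Write `α = ζ ^ p` and `β = ζ ^ q`; it suffices to show `α ^ 6 = 1`, and `β ^ 6 = 1` by symmetry.
Since `|α| = |β| = 1`, conjugating `a α + b β + c = 0` gives `a α⁻¹ + b β⁻¹ + c = 0`, and
multiplying `b β = -(a α + c)` by `b β⁻¹ = -(a α⁻¹ + c)` gives `a c (α + α⁻¹) = b² - a² - c²`.
So `α + α⁻¹ = 2 Re α` is a rational algebraic integer, i.e. an integer `k` with `|k| ≤ 2`,
and `α` is a root of `X² - k X + 1`. For `k ≠ 0` this forces `α ^ 6 = 1`. If `k = 0`, then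
`b² = a² + c²`, while the integer `l = β + β⁻¹` satisfies `b l = -2 c`; this leaves
`4 a² = 3 b²`, impossible as `3` is not a rational square.
-/

theorem Int.mul_ne_neg_two_mul_of_sq_eq_sq_add_sq {a b c l : ℤ} (ha : a ≠ 0) (hb : b ≠ 0)
    (hc : c ≠ 0) (hl : |l| ≤ 2) (h : b ^ 2 = a ^ 2 + c ^ 2) : b * l ≠ -2 * c := by
  intro hbl
  have hsq : 4 * a ^ 2 = b ^ 2 * (4 - l ^ 2) := by linear_combination -4 * h + (b * l - 2 * c) * hbl
  have h3 : 4 * a ^ 2 ≠ 3 * b ^ 2 := fun h3 => by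
    have : IsSquare (3 : ℚ) := ⟨2 * a / b, by field_simp; exact_mod_cast h3.symm⟩
    exact Nat.prime_three.prime.not_isSquare (Rat.isSquare_ofNat_iff.1 this)
  obtain ⟨hl₁, hl₂⟩ := abs_le.1 hl
  interval_cases l
  · exact ha (by simpa using hsq)
  · exact h3 (by linear_combination hsq)
  · exact hc (by simpa using hbl)
  · exact h3 (by linear_combination hsq)
  · exact ha (by simpa using hsq)

theorem natCast_orderOf_dvd_of_zpow_eq_one {G₀ : Type*} [GroupWithZero G₀] {x : G₀}
    (hx : x ≠ 0) {k : ℤ} (h : x ^ k = 1) : (orderOf x : ℤ) ∣ k := by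
  rw [← Units.val_mk0 hx, orderOf_units, orderOf_dvd_iff_zpow_eq_one]
  exact Units.ext (by simpa using h)

namespace Complex

theorem exists_int_add_inv_eq_of_pow_eq_one {α : ℂ} {n : ℕ} (hn : n ≠ 0) (hα : α ^ n = 1)
    (hrat : ∃ r : ℚ, α + α⁻¹ = r) : ∃ k : ℤ, α + α⁻¹ = k ∧ |k| ≤ 2 := by
  have hint : IsIntegral ℤ (α + α⁻¹) := by
    refine (IsIntegral.of_pow (Nat.pos_of_ne_zero hn) ?_).add
      (IsIntegral.of_pow (Nat.pos_of_ne_zero hn) ?_)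
    · rw [hα]; exact isIntegral_one
    · rw [inv_pow, hα, inv_one]; exact isIntegral_one
  obtain ⟨k, hk⟩ := (IsIntegral.exists_int_iff_exists_rat hint).1 hrat
  refine ⟨k, hk, ?_⟩
  have hnorm : ‖(k : ℂ)‖ ≤ 2 := by
    calc ‖(k : ℂ)‖ = ‖α + α⁻¹‖ := by rw [hk]
      _ ≤ ‖α‖ + ‖α⁻¹‖ := norm_add_le _ _
      _ = 2 := by rw [norm_inv, norm_eq_one_of_pow_eq_one hα hn]; norm_num
  exact_mod_cast (norm_intCast k ▸ hnorm : |(k : ℝ)| ≤ 2)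

theorem mul_mul_add_inv_eq_of_add_add_eq_zero {α β : ℂ} (hα : ‖α‖ = 1) (hβ : ‖β‖ = 1)
    {a b c : ℤ} (h : a * α + b * β + c = 0) : a * c * (α + α⁻¹) = b ^ 2 - a ^ 2 - c ^ 2 := by
  have hα0 : α ≠ 0 := norm_ne_zero_iff.1 (by rw [hα]; exact one_ne_zero)
  have hβ0 : β ≠ 0 := norm_ne_zero_iff.1 (by rw [hβ]; exact one_ne_zero)
  have hconj : a * α⁻¹ + b * β⁻¹ + c = 0 := by
    simpa [← inv_eq_conj hα, ← inv_eq_conj hβ] using congrArg (starRingEnd ℂ) h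
  linear_combination (-(b : ℂ) * β⁻¹) * h + (a * α + c) * hconj + b ^ 2 * mul_inv_cancel₀ hβ0
    - a ^ 2 * mul_inv_cancel₀ hα0

theorem exists_int_add_inv_eq_of_add_add_eq_zero {α β : ℂ} {n : ℕ}
    (hn : n ≠ 0) (hα : α ^ n = 1) (hβ : ‖β‖ = 1) {a b c : ℤ} (ha : a ≠ 0) (hc : c ≠ 0)
    (h : a * α + b * β + c = 0) :
    ∃ k : ℤ, α + α⁻¹ = k ∧ |k| ≤ 2 ∧ a * c * k = b ^ 2 - a ^ 2 - c ^ 2 := by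
  have htr := mul_mul_add_inv_eq_of_add_add_eq_zero (norm_eq_one_of_pow_eq_one hα hn) hβ h
  have hac : (a * c : ℂ) ≠ 0 := by exact_mod_cast mul_ne_zero ha hc
  have hrat : α + α⁻¹ = ((b ^ 2 - a ^ 2 - c ^ 2) / (a * c) : ℚ) := by
    push_cast
    rw [eq_div_iff hac]
    linear_combination htr
  obtain ⟨k, hk, hk2⟩ := exists_int_add_inv_eq_of_pow_eq_one hn hα ⟨_, hrat⟩
  exact ⟨k, hk, hk2, by rw [hk] at htr; exact_mod_cast htr⟩

theorem pow_six_eq_one_of_add_inv_eq {α : ℂ} (hα : α ≠ 0) {k : ℤ} (hk : α + α⁻¹ = k)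
    (hk0 : k ≠ 0) (hk2 : |k| ≤ 2) : α ^ 6 = 1 := by
  have hquad : α ^ 2 - k * α + 1 = 0 := by linear_combination α * hk - mul_inv_cancel₀ hα
  obtain ⟨hk₁, hk₂⟩ := abs_le.1 hk2
  interval_cases k <;> push_cast at hquad
  · have hsq : (α + 1) ^ 2 = 0 := by linear_combination hquad
    rw [show α = -1 by linear_combination pow_eq_zero_iff two_ne_zero |>.1 hsq]
    norm_num
  · linear_combination (α - 1) * (α ^ 3 + 1) * hquad
  · contradiction
  · linear_combination (α + 1) * (α ^ 3 - 1) * hquad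
  · have hsq : (α - 1) ^ 2 = 0 := by linear_combination hquad
    rw [show α = 1 by linear_combination pow_eq_zero_iff two_ne_zero |>.1 hsq]
    norm_num

theorem pow_six_eq_one_of_add_add_eq_zero {α β : ℂ} {n : ℕ} (hn : n ≠ 0)
    (hα : α ^ n = 1) (hβ : β ^ n = 1) {a b c : ℤ} (ha : a ≠ 0) (hb : b ≠ 0) (hc : c ≠ 0)
    (h : a * α + b * β + c = 0) : α ^ 6 = 1 := by
  obtain ⟨k, hk, hk2, hkabc⟩ := exists_int_add_inv_eq_of_add_add_eq_zero hn hα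
    (norm_eq_one_of_pow_eq_one hβ hn) ha hc h
  obtain ⟨l, -, hl2, hlbac⟩ := exists_int_add_inv_eq_of_add_add_eq_zero hn hβ
    (norm_eq_one_of_pow_eq_one hα hn) (a := b) (b := a) hb hc (by linear_combination h)
  refine pow_six_eq_one_of_add_inv_eq (IsUnit.of_pow_eq_one hα hn).ne_zero hk ?_ hk2
  rintro rfl
  refine Int.mul_ne_neg_two_mul_of_sq_eq_sq_add_sq ha hb hc hl2 (by linarith) ?_
  exact mul_right_cancel₀ hc (by linear_combination hlbac + hkabc)

end Complex

theorem stmt_3_general (a b c : ℤ) (p q : ℤ) (ha : a ≠ 0) (hb : b ≠ 0) (hc : c ≠ 0)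
    (ζ : ℂ) (hζ : ∃ n : ℕ, 0 < n ∧ ζ ^ n = 1)
    (heq : a * ζ ^ p + b * ζ ^ q + c = 0) :
    (orderOf ζ : ℤ) ∣ 6 * (Int.gcd p q : ℤ) := by
  obtain ⟨n, hn, hζn⟩ := hζ
  have hζ0 : ζ ≠ 0 := (IsUnit.of_pow_eq_one hζn hn.ne').ne_zero
  have hroot (t : ℤ) : (ζ ^ t) ^ n = 1 := by
    rw [← zpow_natCast, ← zpow_mul, mul_comm, zpow_mul, zpow_natCast, hζn, one_zpow]
  have hdvd {t : ℤ} (ht : (ζ ^ t) ^ 6 = 1) : (orderOf ζ : ℤ) ∣ 6 * t :=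
    natCast_orderOf_dvd_of_zpow_eq_one hζ0 (by rw [mul_comm, zpow_mul]; exact_mod_cast ht)
  have hp := Complex.pow_six_eq_one_of_add_add_eq_zero hn.ne' (hroot p) (hroot q) ha hb hc
    heq
  have hq := Complex.pow_six_eq_one_of_add_add_eq_zero hn.ne' (hroot q) (hroot p) hb ha hc
    (by linear_combination heq)
  simpa [Int.gcd_mul_left] using Int.dvd_coe_gcd (hdvd hp) (hdvd hq)

theorem stmt_3 (a b c : ℤ) (p q : ℤ) (ha : a ≠ 0) (hb : b ≠ 0) (hc : c ≠ 0)
    (hpq : (p, q) ≠ (0, 0)) (ζ : ℂ) (hζ : ∃ n : ℕ, 0 < n ∧ ζ ^ n = 1)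
    (heq : a * ζ ^ p + b * ζ ^ q + c = 0) :
    (orderOf ζ : ℤ) ∣ 6 * (Int.gcd p q : ℤ) :=
  stmt_3_general a b c p q ha hb hc ζ hζ heq
end

section
/- Let r ≥ 3, a_{r-1} > ⋯ > a_1 > a_0 ≥ 2 be integers, and with k = r - 2 define Q(z) = (z - 1)·∏_{i=0}^{k}(z^{a_i}-1) - z·∑_{i=0}^{k}(z^{a_i-1}-1)·∏_{j≠i, 0≤j≤k}(z^{a_j}-1). Then Q has at least one real root ξ with ξ > 1. -/
open Polynomial Finset

theorem stmt_8 (r k : ℕ) (hr : 3 ≤ r) (hk : k = r - 2)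
    (a : Fin (k + 1) → ℕ) (hmono : StrictMono a) (ha0 : 2 ≤ a 0) :
    ∀ Q : Polynomial ℝ,
      Q = (X + C (1 - (r : ℝ) + (k : ℝ))) * ∏ i, (X ^ (a i) - 1)
          - X * ∑ i, (X ^ (a i - 1) - 1) * ∏ j ∈ Finset.univ.erase i, (X ^ (a j) - 1) →
      ∃ ξ : ℝ, 1 < ξ ∧ Q.eval ξ = 0 := by
  intro Q hQ
  have hai : ∀ i, 2 ≤ a i := fun i => le_trans ha0 (hmono.monotone (Fin.zero_le i))
  have hc : (1 - (r : ℝ) + (k : ℝ)) = -1 := by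
    subst hk
    have h2 : (2:ℕ) ≤ r := by omega
    push_cast [Nat.cast_sub h2]
    ring
  have heval : ∀ x : ℝ, Q.eval x =
      (x - 1) * ∏ i, (x ^ (a i) - 1)
        - x * ∑ i, (x ^ (a i - 1) - 1) * ∏ j ∈ Finset.univ.erase i, (x ^ (a j) - 1) := by
    intro x
    simp only [hQ, hc, eval_sub, eval_mul, eval_add, eval_prod, eval_finset_sum, eval_pow,
      eval_X, eval_C, eval_one]
    ring
  -- basic positivity facts for x > 1
  have hprodpos : ∀ x : ℝ, 1 < x → 0 < ∏ i, (x ^ (a i) - 1) := by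
    intro x hx
    exact Finset.prod_pos fun i _ => sub_pos.mpr (one_lt_pow₀ hx (by have := hai i; omega))
  have herasepos : ∀ (x : ℝ), 1 < x → ∀ i : Fin (k+1),
      0 < ∏ j ∈ Finset.univ.erase i, (x ^ (a j) - 1) := by
    intro x hx i
    exact Finset.prod_pos fun j _ => sub_pos.mpr (one_lt_pow₀ hx (by have := hai j; omega))
  -- negative at x = 1.1
  have hneg : Q.eval 1.1 < 0 := by
    obtain ⟨x, hxdef⟩ : ∃ y : ℝ, y = 1.1 := ⟨_, rfl⟩
    have hx : (1:ℝ) < x := by rw [hxdef]; norm_num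
    rw [← hxdef, heval x]
    have hE := herasepos x hx 0
    set E : ℝ := ∏ j ∈ Finset.univ.erase (0 : Fin (k+1)), (x ^ (a j) - 1) with hE0
    -- the sum is at least its i = 0 term
    have hsum : (x ^ (a 0 - 1) - 1) * E ≤
        ∑ i, (x ^ (a i - 1) - 1) * ∏ j ∈ Finset.univ.erase i, (x ^ (a j) - 1) := by
      apply Finset.single_le_sum (f := fun i => (x ^ (a i - 1) - 1) * ∏ j ∈ Finset.univ.erase i, (x ^ (a j) - 1))
      · intro i _
        exact mul_nonneg (sub_nonneg.mpr (one_le_pow₀ hx.le)) (herasepos x hx i).le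
      · exact Finset.mem_univ 0
    have hP : ∏ i, (x ^ (a i) - 1) = (x ^ (a 0) - 1) * E :=
      (Finset.mul_prod_erase Finset.univ _ (Finset.mem_univ 0)).symm
    have hxx : x * x ^ (a 0 - 1) = x ^ (a 0) := by
      rw [← pow_succ']
      congr 1
      omega
    have hkey : (x - 1) * (x ^ (a 0) - 1) - x * (x ^ (a 0 - 1) - 1) < 0 := by
      have hp : (1.21 : ℝ) ≤ x ^ (a 0) := by
        calc (1.21:ℝ) = x ^ 2 := by norm_num [hxdef]
        _ ≤ x ^ (a 0) := pow_le_pow_right₀ hx.le ha0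
      rw [hxdef] at hp hxx ⊢
      nlinarith [hp, hxx]
    calc (x - 1) * ∏ i, (x ^ (a i) - 1)
          - x * ∑ i, (x ^ (a i - 1) - 1) * ∏ j ∈ Finset.univ.erase i, (x ^ (a j) - 1)
        ≤ (x - 1) * ∏ i, (x ^ (a i) - 1) - x * ((x ^ (a 0 - 1) - 1) * E) := by
          have hx0 : (0:ℝ) < x := by positivity
          nlinarith [mul_le_mul_of_nonneg_left hsum hx0.le]
      _ = ((x - 1) * (x ^ (a 0) - 1) - x * (x ^ (a 0 - 1) - 1)) * E := by rw [hP]; ring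
      _ < 0 := mul_neg_of_neg_of_pos hkey hE
  -- positive at x = k + 3
  have hpos : 0 < Q.eval ((k : ℝ) + 3) := by
    set x : ℝ := (k : ℝ) + 3 with hxdef
    have hx : (1:ℝ) < x := by
      have : (0:ℝ) ≤ (k:ℝ) := Nat.cast_nonneg k
      linarith
    rw [heval x]
    have hP := hprodpos x hx
    set P : ℝ := ∏ i, (x ^ (a i) - 1) with hPdef
    have hterm : ∀ i : Fin (k+1),
        x * ((x ^ (a i - 1) - 1) * ∏ j ∈ Finset.univ.erase i, (x ^ (a j) - 1)) ≤ P := by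
      intro i
      have hE := herasepos x hx i
      have hxx : x * x ^ (a i - 1) = x ^ (a i) := by
        rw [← pow_succ']
        congr 1
        have := hai i; omega
      have h1 : x * (x ^ (a i - 1) - 1) ≤ x ^ (a i) - 1 := by nlinarith
      calc x * ((x ^ (a i - 1) - 1) * ∏ j ∈ Finset.univ.erase i, (x ^ (a j) - 1))
          = (x * (x ^ (a i - 1) - 1)) * ∏ j ∈ Finset.univ.erase i, (x ^ (a j) - 1) := by ring
        _ ≤ (x ^ (a i) - 1) * ∏ j ∈ Finset.univ.erase i, (x ^ (a j) - 1) :=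
            mul_le_mul_of_nonneg_right h1 hE.le
        _ = P := by
            rw [hPdef]
            exact Finset.mul_prod_erase Finset.univ (fun j => x ^ (a j) - 1) (Finset.mem_univ i)
    have hsum : x * (∑ i, (x ^ (a i - 1) - 1) * ∏ j ∈ Finset.univ.erase i, (x ^ (a j) - 1))
        ≤ ((k : ℝ) + 1) * P := by
      rw [Finset.mul_sum]
      calc ∑ i, x * ((x ^ (a i - 1) - 1) * ∏ j ∈ Finset.univ.erase i, (x ^ (a j) - 1))
          ≤ ∑ _i : Fin (k+1), P := Finset.sum_le_sum fun i _ => hterm i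
        _ = ((k : ℝ) + 1) * P := by
            rw [Finset.sum_const, Finset.card_univ, Fintype.card_fin]
            push_cast
            ring
    have : (x - 1) * P - ((k : ℝ) + 1) * P = P := by rw [hxdef]; ring
    nlinarith [hsum, hP]
  -- intermediate value theorem
  have h13 : (1.1 : ℝ) ≤ (k : ℝ) + 3 := by
    have : (0:ℝ) ≤ (k:ℝ) := Nat.cast_nonneg k
    linarith
  have hcont : ContinuousOn (fun x : ℝ => Q.eval x) (Set.Icc (1.1:ℝ) ((k:ℝ) + 3)) :=
    Q.continuousOn
  obtain ⟨ξ, hmem, hξ⟩ := intermediate_value_Icc h13 hcont ⟨hneg.le, hpos.le⟩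
  exact ⟨ξ, lt_of_lt_of_le (by norm_num) hmem.1, hξ⟩
end

section
/- Let a_0 ≥ 2 be an integer, let φ be the unique real root greater than 1 of M(x) = x^{a_0} - x^{a_0-1} - ⋯ - x - 1, and fix η ≥ 1 and ε > 0, with ε small enough that M has no other root in the closed ball of radius ε around φ and φ - 1 - ε > 0. Define, for a_1 > a_0 and a_2 = a_1 + η, P_{a_1}(z) = z^{a_1+a_2}(z-1)M(z) + z^{a_1+1}R(z) + S(z) with R(z) = z^{η+a_0-1} - z^{η} + z^{a_0-1} - 1 and S(z) = -z^{a_0+1} + 2z - 1. Then for all sufficiently large a_1, the polynomial P_{a_1} has a root in the open ball of radius ε around φ. -/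
/-!
Since the claim only asks for a root near `φ`, it suffices to find a real one. Write
`P_{a₁}(x) = x^{2a₁+η} (x - 1) M(x) + x^{a₁+1} R(x) + S(x)`. For fixed `x > 1` the first term dominates
as `a₁ → ∞`, so `P_{a₁}(x)` eventually has the sign of `(x - 1) M(x)`, that is, of `x - φ`: indeed
`M(x) / x^{a₀} = 1 - ∑_{j=1}^{a₀} x^{-j}` is strictly increasing on `(0, ∞)` and vanishes at `φ`.
Evaluating at `φ ∓ ε/2` and applying the intermediate value theorem gives a real root within `ε/2`
of `φ`.
-/

open Finset Filter

/-- The characteristic polynomial `x^k - x^(k-1) - ⋯ - x - 1` of the `k`-bonacci recurrence. -/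
def bonacciPoly {R : Type*} [CommRing R] (k : ℕ) (x : R) : R :=
  x ^ k - ∑ i ∈ range k, x ^ i

/-- The polynomial `P_{a₁}` of the statement, with `a₂ = a₁ + η`. -/
def perturbedBonacciPoly {R : Type*} [CommRing R] (a0 η a1 : ℕ) (z : R) : R :=
  z ^ (a1 + (a1 + η)) * (z - 1) * bonacciPoly a0 z
    + z ^ (a1 + 1) * (z ^ (η + a0 - 1) - z ^ η + z ^ (a0 - 1) - 1)
    + (-z ^ (a0 + 1) + 2 * z - 1)

theorem RingHom.map_perturbedBonacciPoly {R S : Type*} [CommRing R] [CommRing S] (f : R →+* S)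
    (a0 η a1 : ℕ) (z : R) :
    f (perturbedBonacciPoly a0 η a1 z) = perturbedBonacciPoly a0 η a1 (f z) := by
  simp [perturbedBonacciPoly, bonacciPoly, map_sum, map_ofNat]

theorem continuous_perturbedBonacciPoly (a0 η a1 : ℕ) :
    Continuous (perturbedBonacciPoly a0 η a1 : ℝ → ℝ) := by
  unfold perturbedBonacciPoly bonacciPoly
  fun_prop

theorem bonacciPoly_div_pow {x : ℝ} (hx : x ≠ 0) (k : ℕ) :
    bonacciPoly k x / x ^ k = 1 - ∑ i ∈ range k, (x ^ (k - i))⁻¹ := by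
  rw [bonacciPoly, sub_div, div_self (pow_ne_zero k hx), sum_div]
  congr 1
  refine sum_congr rfl fun i hi => ?_
  rw [← Nat.add_sub_of_le (mem_range.mp hi).le, pow_add, Nat.add_sub_cancel_left,
    div_mul_cancel_left₀ (pow_ne_zero i hx)]

theorem strictMonoOn_bonacciPoly_div_pow {k : ℕ} (hk : k ≠ 0) :
    StrictMonoOn (fun x : ℝ => bonacciPoly k x / x ^ k) (Set.Ioi 0) := by
  intro x hx y _ hxy
  simp only [bonacciPoly_div_pow (ne_of_gt hx), bonacciPoly_div_pow (ne_of_gt (hx.out.trans hxy)),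
    sub_lt_sub_iff_left]
  refine sum_lt_sum_of_nonempty (nonempty_range_iff.mpr hk) fun i hi => ?_
  have hi : k - i ≠ 0 := by have := mem_range.mp hi; omega
  exact inv_strictAnti₀ (pow_pos hx.out _) (pow_lt_pow_left₀ hxy hx.out.le hi)

theorem ne_zero_of_bonacciPoly_eq_zero {k : ℕ} {φ : ℝ} (hroot : bonacciPoly k φ = 0) : k ≠ 0 := by
  rintro rfl
  simp [bonacciPoly] at hroot

theorem bonacciPoly_neg_of_lt {k : ℕ} {φ x : ℝ} (hroot : bonacciPoly k φ = 0) (hx : 0 < x)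
    (hxφ : x < φ) : bonacciPoly k x < 0 := by
  have : bonacciPoly k x / x ^ k < bonacciPoly k φ / φ ^ k :=
    strictMonoOn_bonacciPoly_div_pow (ne_zero_of_bonacciPoly_eq_zero hroot) hx (hx.trans hxφ) hxφ
  rwa [hroot, zero_div, div_lt_iff₀ (pow_pos hx k), zero_mul] at this

theorem bonacciPoly_pos_of_gt {k : ℕ} {φ x : ℝ} (hroot : bonacciPoly k φ = 0) (hφ : 0 < φ)
    (hxφ : φ < x) : 0 < bonacciPoly k x := by
  have hx : 0 < x := hφ.trans hxφ
  have : bonacciPoly k φ / φ ^ k < bonacciPoly k x / x ^ k :=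
    strictMonoOn_bonacciPoly_div_pow (ne_zero_of_bonacciPoly_eq_zero hroot) hφ hx hxφ
  rwa [hroot, zero_div, lt_div_iff₀ (pow_pos hx k), zero_mul] at this

theorem tendsto_pow_add_pow_add_atTop {x c : ℝ} (hx : 1 < x) (hc : 0 < c) (k : ℕ) (r s : ℝ) :
    Tendsto (fun n : ℕ => x ^ (n + (n + k)) * c + x ^ (n + 1) * r + s) atTop atTop := by
  have hquad : Tendsto (fun y : ℝ => y * (y * (x ^ k * c) + x * r) + s) atTop atTop :=
    tendsto_atTop_add_const_right _ _ <| tendsto_id.atTop_mul_atTop₀ <|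
      tendsto_atTop_add_const_right _ _ <| tendsto_id.atTop_mul_const (by positivity)
  refine (hquad.comp (tendsto_pow_atTop_atTop_of_one_lt hx)).congr fun n => ?_
  simp only [Function.comp_apply, pow_add, pow_one]
  ring

theorem tendsto_pow_add_pow_add_atBot {x c : ℝ} (hx : 1 < x) (hc : c < 0) (k : ℕ) (r s : ℝ) :
    Tendsto (fun n : ℕ => x ^ (n + (n + k)) * c + x ^ (n + 1) * r + s) atTop atBot := by
  refine (tendsto_neg_atTop_atBot.comp
    (tendsto_pow_add_pow_add_atTop hx (neg_pos.mpr hc) k (-r) (-s))).congr fun n => ?_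
  simp only [Function.comp_apply]
  ring

theorem perturbedBonacciPoly_eq (a0 η a1 : ℕ) (x : ℝ) :
    perturbedBonacciPoly a0 η a1 x = x ^ (a1 + (a1 + η)) * ((x - 1) * bonacciPoly a0 x)
      + x ^ (a1 + 1) * (x ^ (η + a0 - 1) - x ^ η + x ^ (a0 - 1) - 1)
      + (-x ^ (a0 + 1) + 2 * x - 1) := by
  rw [perturbedBonacciPoly, mul_assoc]

theorem tendsto_perturbedBonacciPoly_atTop {a0 η : ℕ} {x : ℝ} (hx : 1 < x)
    (h : 0 < bonacciPoly a0 x) :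
    Tendsto (fun a1 => perturbedBonacciPoly a0 η a1 x) atTop atTop := by
  simpa only [perturbedBonacciPoly_eq] using
    tendsto_pow_add_pow_add_atTop hx (mul_pos (sub_pos.mpr hx) h) η _ _

theorem tendsto_perturbedBonacciPoly_atBot {a0 η : ℕ} {x : ℝ} (hx : 1 < x)
    (h : bonacciPoly a0 x < 0) :
    Tendsto (fun a1 => perturbedBonacciPoly a0 η a1 x) atTop atBot := by
  simpa only [perturbedBonacciPoly_eq] using
    tendsto_pow_add_pow_add_atBot hx (mul_neg_of_pos_of_neg (sub_pos.mpr hx) h) η _ _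

theorem stmt_11_general (a0 η : ℕ)
    (φ : ℝ) (hφroot : φ ^ a0 - ∑ i ∈ range a0, φ ^ i = 0)
    (ε : ℝ) (hε : 0 < ε) (hε1 : φ - 1 - ε > 0) :
    ∃ N : ℕ, ∀ a1 : ℕ, N ≤ a1 → a0 < a1 →
      ∃ z : ℂ, ‖z - φ‖ < ε ∧
        z ^ (a1 + (a1 + η)) * (z - 1) * (z ^ a0 - ∑ i ∈ range a0, z ^ i)
          + z ^ (a1 + 1) * (z ^ (η + a0 - 1) - z ^ η + z ^ (a0 - 1) - 1)
          + (-z ^ (a0 + 1) + 2 * z - 1) = 0 := by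
  have hφ : 0 < φ := by linarith
  have hlo : 1 < φ - ε / 2 := by linarith
  have hneg := tendsto_perturbedBonacciPoly_atBot (η := η) hlo
    (bonacciPoly_neg_of_lt hφroot (by linarith) (by linarith))
  have hpos := tendsto_perturbedBonacciPoly_atTop (η := η) (by linarith : 1 < φ + ε / 2)
    (bonacciPoly_pos_of_gt hφroot hφ (by linarith))
  obtain ⟨N, hN⟩ := eventually_atTop.mp
    ((hneg.eventually_lt_atBot 0).and (hpos.eventually_gt_atTop 0))
  refine ⟨N, fun a1 ha1 _ => ?_⟩
  obtain ⟨x, ⟨hx_lo, hx_hi⟩, hx⟩ := intermediate_value_Icc (by linarith)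
    (continuous_perturbedBonacciPoly a0 η a1).continuousOn
    ⟨(hN a1 ha1).1.le, (hN a1 ha1).2.le⟩
  refine ⟨x, ?_, ?_⟩
  · rw [← Complex.ofReal_sub, Complex.norm_real, Real.norm_eq_abs, abs_lt]
    constructor <;> linarith
  · have := congrArg Complex.ofRealHom hx
    rwa [RingHom.map_perturbedBonacciPoly, map_zero] at this

theorem stmt_11 (a0 η : ℕ) (h0 : 2 ≤ a0) (hη : 1 ≤ η)
    (φ : ℝ) (hφ1 : 1 < φ) (hφroot : φ ^ a0 - ∑ i ∈ range a0, φ ^ i = 0)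
    (ε : ℝ) (hε : 0 < ε) (hε1 : φ - 1 - ε > 0)
    (hε2 : ∀ z : ℂ, ‖z - φ‖ ≤ ε →
      z ^ a0 - ∑ i ∈ range a0, z ^ i = 0 → z = φ) :
    ∃ N : ℕ, ∀ a1 : ℕ, N ≤ a1 → a0 < a1 →
      ∃ z : ℂ, ‖z - φ‖ < ε ∧
        z ^ (a1 + (a1 + η)) * (z - 1) * (z ^ a0 - ∑ i ∈ range a0, z ^ i)
          + z ^ (a1 + 1) * (z ^ (η + a0 - 1) - z ^ η + z ^ (a0 - 1) - 1)
          + (-z ^ (a0 + 1) + 2 * z - 1) = 0 :=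
  stmt_11_general a0 η φ hφroot ε hε hε1
end
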